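/- Let O be an observation and W a word, with two representations W̄_p and W̄_q of W associated to position constants p and q respectively. Then O·W̄_p is nilpotent if and only if O·W̄_q is nilpotent. Consequently the language of O can be equivalently defined with a universal or an existential quantification over representations. -/

import Mathlib

/-- First-order terms over natural-number symbols: variables and applications. -/
inductive Tm : Type
  | var : ℕ → Tm
  | app : ℕ → List Tm → Tm

namespace Tm

/-- Apply a substitution (map from variables to terms) homomorphically. -/
def subst (σ : ℕ → Tm) : Tm → Tm
  | var x => σ x
  | app f ts => app f (ts.attach.map fun ⟨t, _⟩ => subst σ t)

/-- List of variables occurring in a term. -/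
def varsL : Tm → List ℕ
  | var x => [x]
  | app _ ts => ts.attach.flatMap fun ⟨t, _⟩ => varsL t

/-- Height of a term: maximal distance from the root to a subterm. -/
def height : Tm → ℕ
  | var _ => 0
  | app _ ts => (ts.attach.map fun ⟨t, _⟩ => height t + 1).foldr max 0

/-- Heights of the occurrences of the variable `x` in a term. -/
def occs (x : ℕ) : Tm → List ℕ
  | var y => if y = x then [0] else []
  | app _ ts => ts.attach.flatMap fun ⟨t, _⟩ => (occs x t).map (· + 1)

/-- Symbols occurring in a term, together with the arity they are used with. -/
def symar : Tm → List (ℕ × ℕ)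
  | var _ => []
  | app f ts => (f, ts.length) :: ts.attach.flatMap fun ⟨t, _⟩ => symar t

end Tm

open Tm

/-- Set of variables of a term. -/
def tvars (t : Tm) : Set ℕ := {x | x ∈ t.varsL}

/-- A term is closed when it has no variables. -/
def Closed (t : Tm) : Prop := t.varsL = []

/-- A substitution is finitary when it is the identity on all but finitely many variables. -/
def Finitary (σ : ℕ → Tm) : Prop := {x | σ x ≠ .var x}.Finite

/-- `σ` unifies `t` and `u`. -/
def Unifies (σ : ℕ → Tm) (t u : Tm) : Prop := subst σ t = subst σ u

/-- `θ` is a most general unifier of `t` and `u`: a (finitary) unifier such that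
any other finitary unifier factors as an instance of it. -/
def IsMGU (θ : ℕ → Tm) (t u : Tm) : Prop :=
  Finitary θ ∧ Unifies θ t u ∧
    ∀ σ, Finitary σ → Unifies σ t u → ∃ ρ, Finitary ρ ∧ ∀ x, σ x = subst ρ (θ x)

/-- Renaming of a term along a bijection of variables. -/
def rename (π : ℕ ≃ ℕ) (t : Tm) : Tm := subst (fun x => .var (π x)) t

/-- A flow is (the data of) a pair of terms `head ⊸ body`. -/
abbrev UFlow := Tm × Tm

/-- The flow condition: the variables of the head occur in the body. -/
def IsFlow (f : UFlow) : Prop := tvars f.1 ⊆ tvars f.2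

/-- Equality of flows up to (simultaneous, bijective) renaming of variables. -/
def FlowEquiv (f g : UFlow) : Prop :=
  ∃ π : ℕ ≃ ℕ, rename π f.1 = g.1 ∧ rename π f.2 = g.2

/-- Variables of a flow. -/
def flowVars (f : UFlow) : Set ℕ := tvars f.1 ∪ tvars f.2

/-- `h` is a product of the flows `f = u ⊸ v` and `g = t ⊸ w`: choosing representatives
with disjoint variables, `h = uθ ⊸ wθ` for `θ` a most general unifier of `v` and `t`. -/
def IsProd (f g h : UFlow) : Prop :=
  ∃ f' g' θ, FlowEquiv f f' ∧ FlowEquiv g g' ∧ flowVars f' ∩ flowVars g' = ∅ ∧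
    IsMGU θ f'.2 g'.1 ∧ h = (subst θ f'.1, subst θ g'.2)

/-- A wiring: a set of flows (finite sets of flows are considered up to renaming,
so we model them as sets of representatives). -/
abbrev Wiring := Set UFlow

/-- Product of wirings: pointwise product of flows, where defined. -/
def wmul (F G : Wiring) : Wiring := {h | ∃ f ∈ F, ∃ g ∈ G, IsProd f g h}

/-- The unit wiring `I = x ⊸ x`. -/
def wI : Wiring := {f | FlowEquiv (.var 0, .var 0) f}

/-- Powers of a wiring. -/
def wpow (F : Wiring) : ℕ → Wiring
  | 0 => wI
  | n + 1 => wmul F (wpow F n)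

/-- Equality of wirings up to renaming of each flow. -/
def WEq (F G : Wiring) : Prop :=
  (∀ f ∈ F, ∃ g ∈ G, FlowEquiv f g) ∧ ∀ g ∈ G, ∃ f ∈ F, FlowEquiv f g

/-- A fact: a flow of the form `t ⊸ t` with `t` closed. -/
def IsFact (f : UFlow) : Prop := Closed f.1 ∧ f.2 = f.1

/-- Application of a wiring to (the fact associated with) a closed term:
the set of product flows. -/
def appF (F : Wiring) (t : Tm) : Set UFlow := {h | ∃ f ∈ F, IsProd f (t, t) h}

/-- Application of a wiring to a fact, keeping the facts produced. -/
def factApp (F : Wiring) (t : Tm) : Set Tm := {v | ∃ f ∈ F, IsProd f (t, t) (v, v)}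

/-- A wiring is deterministic if it produces at most one fact from any fact. -/
def Deterministic (F : Wiring) : Prop := ∀ t, Closed t → (appF F t).Subsingleton

/-- Two terms are matchable if renamings of them with disjoint variables are unifiable. -/
def Matchable (t u : Tm) : Prop :=
  ∃ (π π' : ℕ ≃ ℕ), tvars (rename π t) ∩ tvars (rename π' u) = ∅ ∧
    ∃ θ, Finitary θ ∧ Unifies θ (rename π t) (rename π' u)

/-- A flow is balanced if each variable has all its occurrences at the same height. -/
def BalancedF (f : UFlow) : Prop :=
  ∀ x, ∀ n ∈ occs x f.1 ++ occs x f.2, ∀ m ∈ occs x f.1 ++ occs x f.2, n = m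

/-- Height of a flow. -/
def heightF (f : UFlow) : ℕ := max f.1.height f.2.height

/-- A wiring is balanced if all its flows are. -/
def BalancedW (F : Wiring) : Prop := ∀ f ∈ F, BalancedF f

/-- Height of a wiring: maximal height of its flows. -/
noncomputable def heightW (F : Wiring) : ℕ := sSup (heightF '' F)

/-- The computation space of a wiring `F`: closed terms (identified with the
corresponding facts) of height at most `heightW F` built using only symbols
(with their arities) occurring in `F` and the constant `⋆` (symbol `0`). -/
noncomputable def compSpace (F : Wiring) : Set Tm :=
  {t | Closed t ∧ t.height ≤ heightW F ∧
    ∀ q ∈ t.symar, q = (0, 0) ∨ ∃ f ∈ F, q ∈ f.1.symar ++ f.2.symar}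

/-- Nilpotency of a wiring: some power is the empty wiring. -/
def Nilpotent (F : Wiring) : Prop := ∃ n, 0 < n ∧ wpow F n = ∅

/-- Edges of the computation graph of `F`: from `u` to `v` iff `v ∈ F u`. -/
noncomputable def Edge (F : Wiring) (u v : Tm) : Prop :=
  u ∈ compSpace F ∧ v ∈ compSpace F ∧ v ∈ factApp F u

/-- Acyclicity of the computation graph of `F`. -/
noncomputable def AcyclicCG (F : Wiring) : Prop :=
  ¬ ∃ n, 0 < n ∧ ∃ c : ℕ → Tm, (∀ i < n, Edge F (c i) (c (i + 1))) ∧ c n = c 0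

/-- Constant term built on the symbol `s`. -/
def cst (s : ℕ) : Tm := .app s []

/-- The binary function symbol `•` (symbol `1`). -/
def bu (a b : Tm) : Tm := .app 1 [a, b]

/-- The `i`-th letter of the word `⋆ c₁ … cₙ` (`⋆` is the symbol `0`). -/
def letter (w : List ℕ) (i : ℕ) : ℕ := if i = 0 then 0 else w.getD (i - 1) 0

/-- The term `c • d • x • y • M(p)` where `d ∈ {L, R} = {2, 3}`, `x, y` are the
variables `0, 1` and `M` is the unary symbol `4` applied to the position constant `p`. -/
def wt (c d p : ℕ) : Tm :=
  bu (cst c) (bu (cst d) (bu (.var 0) (bu (.var 1) (.app 4 [cst p]))))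

/-- The representation `W̄_p` of the word `w = c₁ … cₙ` associated with the position
constants `p 0, …, p n`: the sum over `i ≤ n` of the flows
`(cᵢ • L • x • y • M(pᵢ)) ⇌ (c_{i+1} • R • x • y • M(p_{i+1}))` (indices mod `n+1`,
`c₀ = c_{n+1} = ⋆`). -/
def wordRep (w : List ℕ) (p : ℕ → ℕ) : Wiring :=
  ⋃ i ∈ Set.Iic w.length,
    {(wt (letter w i) 2 (p i),
      wt (letter w ((i + 1) % (w.length + 1)) ) 3 (p ((i + 1) % (w.length + 1)))),
     (wt (letter w ((i + 1) % (w.length + 1))) 3 (p ((i + 1) % (w.length + 1))),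
      wt (letter w i) 2 (p i))}

/-- An observation over the alphabet `Sig` relative to the set `P` of position
constants: a balanced wiring in `C(Σ∪{⋆}) ⊗ C({L,R}) ⊗ C(S) ⊗ B_{∖P}`, i.e. a sum
of balanced flows not using position constants, whose head and body are of the form
`a • d • s • r` with `a ∈ Σ∪{⋆}`, `d ∈ {L,R}` and `s` a closed (state) term. -/
def IsObservation (Sig : Finset ℕ) (P : Set ℕ) (O : Wiring) : Prop :=
  ∀ f ∈ O, IsFlow f ∧ BalancedF f ∧
    (∀ q ∈ f.1.symar ++ f.2.symar, q.1 ∉ P) ∧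
    ∃ a a' d d' s s' r r', (a ∈ Sig ∨ a = 0) ∧ (a' ∈ Sig ∨ a' = 0) ∧
      (d = 2 ∨ d = 3) ∧ (d' = 2 ∨ d' = 3) ∧ Closed s ∧ Closed s' ∧
      f = (bu (cst a) (bu (cst d) (bu s r)), bu (cst a') (bu (cst d') (bu s' r')))

/-- `p` is a valid choice of (pairwise distinct) position constants for the word `w`. -/
def GoodPos (w : List ℕ) (P : Set ℕ) (p : ℕ → ℕ) : Prop :=
  (∀ i ≤ w.length, p i ∈ P) ∧ Set.InjOn p (Set.Iic w.length)


/-! The position constants occur only in `W̄_p`, never in `O` or in the fixed symbols `⋆, •, L, R, M`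
and the letters of `w`. A permutation `π` of the symbols fixing everything outside `P` and sending
`pᵢ` to `qᵢ` therefore carries `O` to itself and `W̄_p` to `W̄_q`. Renaming symbols along a
bijection commutes with renaming variables, with substitution and hence with most general
unifiers, so it commutes with the product of wirings and with its powers; in particular it
preserves nilpotency. Such a `π` exists because `p` and `q` are injective on the finitely many
positions. Since `P` is infinite, some representation exists, so the universal and the existential
definitions of the language agree. -/

open Set Equiv

theorem Set.InjOn.exists_perm_eqOn {α : Type*} {s : Set α} {f : α → α} (hf : InjOn f s)
    (hs : s.Finite) : ∃ π : Perm α, EqOn π f s ∧ ∀ x ∉ s ∪ f '' s, π x = x := by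
  classical
  set U := (hs.union (hs.image f)).toFinset
  have hsU : ∀ x ∈ s, x ∈ U := fun x hx => by simp [U, hx]
  have hfU : ∀ x ∈ s, f x ∈ U := fun x hx => by simp [U, mem_image_of_mem f hx]
  obtain ⟨g, hg⟩ := Set.MapsTo.exists_equiv_extend_of_card_eq (s := {x : U | x.1 ∈ s})
    (f := fun x => f x) (Fintype.card_coe U) (fun x hx => hfU x hx)
    (fun x hx y hy hxy => Subtype.ext (hf hx hy hxy))
  refine ⟨Perm.ofSubtype g, fun x hx => ?_, fun x hx => ?_⟩
  · rw [Perm.ofSubtype_apply_of_mem g (hsU x hx)]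
    exact hg ⟨x, hsU x hx⟩ hx
  · exact Perm.ofSubtype_apply_of_not_mem g (by simpa [U] using hx)

theorem exists_perm_comp_eqOn {ι α : Type*} {S : Set ι} (hS : S.Finite) {p q : ι → α}
    (hp : InjOn p S) (hq : InjOn q S) :
    ∃ π : Perm α, (∀ i ∈ S, π (p i) = q i) ∧ ∀ x ∉ p '' S ∪ q '' S, π x = x := by
  classical
  rcases S.eq_empty_or_nonempty with rfl | ⟨i₀, -⟩
  · exact ⟨1, by simp, by simp⟩
  have : Nonempty ι := ⟨i₀⟩
  have hinv : ∀ i ∈ S, Function.invFunOn p S (p i) = i := fun i hi =>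
    hp (Function.invFunOn_mem ⟨i, hi, rfl⟩) hi (Function.invFunOn_eq ⟨i, hi, rfl⟩)
  have hmaps : MapsTo (q ∘ Function.invFunOn p S) (p '' S) (q '' S) := by
    rintro _ ⟨i, hi, rfl⟩; exact ⟨i, hi, by simp [hinv i hi]⟩
  have hinj : InjOn (q ∘ Function.invFunOn p S) (p '' S) := by
    rintro _ ⟨i, hi, rfl⟩ _ ⟨j, hj, rfl⟩ h
    simp only [Function.comp, hinv i hi, hinv j hj] at h
    rw [hq hi hj h]
  obtain ⟨π, hπ, hfix⟩ := hinj.exists_perm_eqOn (hS.image p)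
  refine ⟨π, fun i hi => by simp [hπ (mem_image_of_mem p hi), hinv i hi], fun x hx => hfix x ?_⟩
  exact fun h => hx (h.elim Or.inl fun ⟨y, hy, he⟩ => Or.inr (he ▸ hmaps hy))

namespace Tm

theorem induction {motive : Tm → Prop} (var : ∀ x, motive (var x))
    (app : ∀ f ts, (∀ t ∈ ts, motive t) → motive (app f ts)) : ∀ t, motive t
  | .var x => var x
  | .app f ts => app f ts fun t _ => induction var app t

/-- Renaming of function symbols (as opposed to variables, cf. `rename`) along `π`. -/
def mapSym (π : ℕ → ℕ) : Tm → Tm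
  | var x => var x
  | app f ts => app (π f) (ts.attach.map fun ⟨t, _⟩ => mapSym π t)

@[simp] theorem mapSym_var (π : ℕ → ℕ) (x : ℕ) : mapSym π (var x) = var x := by
  rw [mapSym]

theorem mapSym_app (π : ℕ → ℕ) (f : ℕ) (ts : List Tm) :
    mapSym π (app f ts) = app (π f) (ts.map (mapSym π)) := by
  rw [mapSym, List.attach_map_val (f := mapSym π)]

theorem subst_app (σ : ℕ → Tm) (f : ℕ) (ts : List Tm) :
    subst σ (app f ts) = app f (ts.map (subst σ)) := by
  rw [subst, List.attach_map_val (f := subst σ)]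

theorem varsL_app (f : ℕ) (ts : List Tm) : varsL (app f ts) = ts.flatMap varsL := by
  rw [varsL]; simp [List.flatMap]

theorem symar_app (f : ℕ) (ts : List Tm) :
    symar (app f ts) = (f, ts.length) :: ts.flatMap symar := by
  rw [symar]; simp [List.flatMap]

theorem mapSym_mapSym (π π' : ℕ → ℕ) (t : Tm) :
    mapSym π (mapSym π' t) = mapSym (π ∘ π') t := by
  induction t using induction with
  | var x => simp
  | app f ts ih =>
    simp only [mapSym_app, List.map_map, Function.comp_apply]
    exact congrArg _ (List.map_congr_left ih)

theorem mapSym_id (t : Tm) : mapSym id t = t := by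
  induction t using induction with
  | var x => simp
  | app f ts ih =>
    rw [mapSym_app, id, List.map_congr_left ih, List.map_id']

theorem mapSym_symm_mapSym (π : ℕ ≃ ℕ) (t : Tm) : mapSym π.symm (mapSym π t) = t := by
  rw [mapSym_mapSym, Equiv.symm_comp_self, mapSym_id]

theorem mapSym_mapSym_symm (π : ℕ ≃ ℕ) (t : Tm) : mapSym π (mapSym π.symm t) = t := by
  rw [mapSym_mapSym, Equiv.self_comp_symm, mapSym_id]

theorem mapSym_eq_self {π : ℕ → ℕ} {t : Tm} (h : ∀ s ∈ t.symar, π s.1 = s.1) :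
    mapSym π t = t := by
  induction t using induction with
  | var x => simp
  | app f ts ih =>
    rw [symar_app] at h
    rw [mapSym_app, h _ List.mem_cons_self]
    refine congrArg _ ((List.map_congr_left fun t ht => ih t ht fun s hs => ?_).trans ts.map_id)
    exact h s (List.mem_cons_of_mem _ (List.mem_flatMap.mpr ⟨t, ht, hs⟩))

theorem varsL_mapSym (π : ℕ → ℕ) (t : Tm) : varsL (mapSym π t) = varsL t := by
  induction t using induction with
  | var x => simp
  | app f ts ih =>
    rw [mapSym_app, varsL_app, varsL_app, List.flatMap_map]
    exact List.flatMap_congr ih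

theorem mapSym_subst (π : ℕ → ℕ) (σ : ℕ → Tm) (t : Tm) :
    mapSym π (subst σ t) = subst (mapSym π ∘ σ) (mapSym π t) := by
  induction t using induction with
  | var x => simp [subst]
  | app f ts ih =>
    rw [mapSym_app, subst_app, subst_app, mapSym_app, List.map_map, List.map_map]
    exact congrArg _ (List.map_congr_left ih)

end Tm

theorem mapSym_rename (π : ℕ → ℕ) (τ : ℕ ≃ ℕ) (t : Tm) :
    mapSym π (rename τ t) = rename τ (mapSym π t) := by
  rw [rename, rename, mapSym_subst]
  congr 1
  funext x
  exact mapSym_var π (τ x)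

theorem tvars_mapSym (π : ℕ → ℕ) (t : Tm) : tvars (mapSym π t) = tvars t := by
  simp [tvars, varsL_mapSym]

theorem Finitary.mapSym (π : ℕ → ℕ) {σ : ℕ → Tm} (h : Finitary σ) :
    Finitary (Tm.mapSym π ∘ σ) :=
  h.subset fun x hx he => hx (by simp [he])

theorem Unifies.mapSym (π : ℕ → ℕ) {σ : ℕ → Tm} {t u : Tm} (h : Unifies σ t u) :
    Unifies (Tm.mapSym π ∘ σ) (Tm.mapSym π t) (Tm.mapSym π u) := by
  rw [Unifies, ← mapSym_subst, ← mapSym_subst, h]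

theorem IsMGU.mapSym (π : ℕ ≃ ℕ) {θ : ℕ → Tm} {t u : Tm} (h : IsMGU θ t u) :
    IsMGU (Tm.mapSym π ∘ θ) (Tm.mapSym π t) (Tm.mapSym π u) := by
  obtain ⟨hfin, huni, hgen⟩ := h
  refine ⟨hfin.mapSym π, huni.mapSym π, fun σ hσ hσu => ?_⟩
  have hσu' : Unifies (Tm.mapSym π.symm ∘ σ) t u := by
    simpa only [mapSym_symm_mapSym] using hσu.mapSym π.symm
  obtain ⟨ρ, hρ, hfac⟩ := hgen _ (hσ.mapSym π.symm) hσu'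
  refine ⟨Tm.mapSym π ∘ ρ, hρ.mapSym π, fun x => ?_⟩
  rw [← mapSym_mapSym_symm π (σ x), ← Function.comp_apply (f := Tm.mapSym π.symm), hfac,
    mapSym_subst]; rfl

def UFlow.mapSym (π : ℕ → ℕ) (f : UFlow) : UFlow := (f.1.mapSym π, f.2.mapSym π)

theorem UFlow.mapSym_symm_mapSym (π : ℕ ≃ ℕ) (f : UFlow) :
    UFlow.mapSym π.symm (UFlow.mapSym π f) = f := by
  simp [UFlow.mapSym, Tm.mapSym_symm_mapSym]

theorem UFlow.mapSym_mapSym_symm (π : ℕ ≃ ℕ) (f : UFlow) :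
    UFlow.mapSym π (UFlow.mapSym π.symm f) = f := by
  simp [UFlow.mapSym, Tm.mapSym_mapSym_symm]

theorem FlowEquiv.mapSym (π : ℕ → ℕ) {f g : UFlow} (h : FlowEquiv f g) :
    FlowEquiv (f.mapSym π) (g.mapSym π) := by
  obtain ⟨τ, h1, h2⟩ := h
  exact ⟨τ, by simp [UFlow.mapSym, ← mapSym_rename, h1], by simp [UFlow.mapSym, ← mapSym_rename, h2]⟩

theorem flowVars_mapSym (π : ℕ → ℕ) (f : UFlow) : flowVars (f.mapSym π) = flowVars f := by
  simp [flowVars, UFlow.mapSym, tvars_mapSym]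

theorem IsProd.mapSym (π : ℕ ≃ ℕ) {f g h : UFlow} (hp : IsProd f g h) :
    IsProd (f.mapSym π) (g.mapSym π) (h.mapSym π) := by
  obtain ⟨f', g', θ, hf, hg, hdisj, hmgu, rfl⟩ := hp
  refine ⟨f'.mapSym π, g'.mapSym π, Tm.mapSym π ∘ θ, hf.mapSym π, hg.mapSym π, ?_,
    hmgu.mapSym π, ?_⟩
  · rwa [flowVars_mapSym, flowVars_mapSym]
  · simp [UFlow.mapSym, mapSym_subst]

theorem image_mapSym_wmul (π : ℕ ≃ ℕ) (F G : Wiring) :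
    UFlow.mapSym π '' wmul F G = wmul (UFlow.mapSym π '' F) (UFlow.mapSym π '' G) := by
  ext h
  constructor
  · rintro ⟨h, ⟨f, hf, g, hg, hp⟩, rfl⟩
    exact ⟨_, mem_image_of_mem _ hf, _, mem_image_of_mem _ hg, hp.mapSym π⟩
  · rintro ⟨_, ⟨f, hf, rfl⟩, _, ⟨g, hg, rfl⟩, hp⟩
    refine ⟨h.mapSym π.symm, ⟨f, hf, g, hg, ?_⟩, UFlow.mapSym_mapSym_symm π h⟩
    simpa only [UFlow.mapSym_symm_mapSym] using hp.mapSym π.symm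

theorem image_mapSym_eq_self {π : ℕ → ℕ} {F : Wiring}
    (h : ∀ f ∈ F, ∀ s ∈ f.1.symar ++ f.2.symar, π s.1 = s.1) : UFlow.mapSym π '' F = F :=
  EqOn.image_eq_self fun f hf => by
    rw [UFlow.mapSym, mapSym_eq_self fun s hs => h f hf s (List.mem_append_left _ hs),
      mapSym_eq_self fun s hs => h f hf s (List.mem_append_right _ hs)]; rfl

theorem image_mapSym_wI (π : ℕ → ℕ) : UFlow.mapSym π '' wI = wI :=
  image_mapSym_eq_self <| by
    rintro ⟨a, b⟩ ⟨τ, rfl, rfl⟩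
    simp [rename, subst, symar]

theorem image_mapSym_wpow (π : ℕ ≃ ℕ) (F : Wiring) (n : ℕ) :
    UFlow.mapSym π '' wpow F n = wpow (UFlow.mapSym π '' F) n := by
  induction n with
  | zero => exact image_mapSym_wI π
  | succ n ih => rw [wpow, wpow, image_mapSym_wmul, ih]

theorem nilpotent_image_mapSym (π : ℕ ≃ ℕ) (F : Wiring) :
    Nilpotent (UFlow.mapSym π '' F) ↔ Nilpotent F := by
  simp only [Nilpotent, ← image_mapSym_wpow, image_eq_empty]

theorem mapSym_wt {π : ℕ → ℕ} (h1 : π 1 = 1) (h4 : π 4 = 4) (c d p : ℕ) :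
    mapSym π (wt c d p) = wt (π c) (π d) (π p) := by
  simp [wt, bu, cst, mapSym_app, h1, h4]

theorem letter_eq_zero_or_mem (w : List ℕ) (i : ℕ) : letter w i = 0 ∨ letter w i ∈ w := by
  unfold letter
  split_ifs
  · exact Or.inl rfl
  · rcases Nat.lt_or_ge (i - 1) w.length with h | h
    · exact Or.inr (by rw [List.getD_eq_getElem _ _ h]; exact List.getElem_mem h)
    · exact Or.inl (List.getD_eq_default _ _ h)

theorem image_mapSym_wordRep {π : ℕ → ℕ} {w : List ℕ} {p q : ℕ → ℕ}
    (h1 : π 1 = 1) (h2 : π 2 = 2) (h3 : π 3 = 3) (h4 : π 4 = 4)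
    (hletter : ∀ i, π (letter w i) = letter w i) (hpq : ∀ i ≤ w.length, π (p i) = q i) :
    UFlow.mapSym π '' wordRep w p = wordRep w q := by
  rw [wordRep, wordRep, image_iUnion₂]
  refine iUnion₂_congr fun i hi => ?_
  have hsucc : (i + 1) % (w.length + 1) ≤ w.length :=
    Nat.lt_succ_iff.mp (Nat.mod_lt _ w.length.succ_pos)
  simp only [image_insert_eq, image_singleton, UFlow.mapSym, mapSym_wt h1 h4, h2, h3, hletter,
    hpq i hi, hpq _ hsucc]

theorem exists_goodPos (w : List ℕ) {P : Set ℕ} (hP : P.Infinite) : ∃ p, GoodPos w P p :=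
  let e := hP.natEmbedding
  ⟨fun i => e i, fun i _ => (e i).2, fun _ _ _ _ h => e.injective (Subtype.ext h)⟩

/-- for an observation `O` and a word `w`, `O·W̄_p` is nilpotent iff
`O·W̄_q` is nilpotent, for any two representations of `w`; consequently the language
of `O` can equivalently be defined by a universal or an existential quantification
over representations. -/
theorem representation_independence (Sig : Finset ℕ) (P : Set ℕ) (O : Wiring)
    (w : List ℕ) (hPinf : P.Infinite)
    (hP : ∀ s ∈ P, s ∉ Sig ∧ s ≠ 0 ∧ s ≠ 1 ∧ s ≠ 2 ∧ s ≠ 3 ∧ s ≠ 4)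
    (hw : ∀ c ∈ w, c ∈ Sig) (hO : IsObservation Sig P O) :
    (∀ p q : ℕ → ℕ, GoodPos w P p → GoodPos w P q →
      (Nilpotent (wmul O (wordRep w p)) ↔ Nilpotent (wmul O (wordRep w q)))) ∧
    ((∀ p, GoodPos w P p → Nilpotent (wmul O (wordRep w p))) ↔
      (∃ p, GoodPos w P p ∧ Nilpotent (wmul O (wordRep w p)))) := by
  have hletter : ∀ i, letter w i ∉ P := fun i hi =>
    (letter_eq_zero_or_mem w i).elim (hP _ hi).2.1 fun hmem => (hP _ hi).1 (hw _ hmem)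
  have hindep : ∀ p q : ℕ → ℕ, GoodPos w P p → GoodPos w P q →
      (Nilpotent (wmul O (wordRep w p)) ↔ Nilpotent (wmul O (wordRep w q))) := by
    intro p q ⟨hpP, hp⟩ ⟨hqP, hq⟩
    obtain ⟨π, hpq, hfix⟩ := exists_perm_comp_eqOn (finite_Iic w.length) hp hq
    have hπ : ∀ x ∉ P, π x = x := by
      refine fun x hx => hfix x ?_
      rintro (⟨i, hi, rfl⟩ | ⟨i, hi, rfl⟩)
      exacts [hx (hpP i hi), hx (hqP i hi)]
    have hOfixed : UFlow.mapSym π '' O = O :=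
      image_mapSym_eq_self fun f hf s hs => hπ _ ((hO f hf).2.2.1 s hs)
    have hW : UFlow.mapSym π '' wordRep w p = wordRep w q :=
      image_mapSym_wordRep (hπ 1 fun h => (hP 1 h).2.2.1 rfl) (hπ 2 fun h => (hP 2 h).2.2.2.1 rfl)
        (hπ 3 fun h => (hP 3 h).2.2.2.2.1 rfl) (hπ 4 fun h => (hP 4 h).2.2.2.2.2 rfl)
        (fun i => hπ _ (hletter i)) hpq
    rw [← nilpotent_image_mapSym π, image_mapSym_wmul, hOfixed, hW]
  refine ⟨hindep, fun hall => ?_, fun ⟨p, hp, hnil⟩ q hq => (hindep p q hp hq).mp hnil⟩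
  obtain ⟨p, hp⟩ := exists_goodPos w hPinf
  exact ⟨p, hp, hall p hp⟩
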